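/- Let ε ∈ (0, 1/2), let (Z_i)_{i≥1} be i.i.d. with P(Z_i = 1) = 1 − ε and P(Z_i = −1) = ε, X_n = Z_1 + ⋯ + Z_n, and for a positive integer N let T_N = inf{n ≥ 1 : X_n = N}. Then for every real α ≥ 0, limsup_{N→∞} P[T_N ≥ αN] ≤ exp(−α + 1/(1 − 2ε)). -/

import Mathlib

open MeasureTheory ProbabilityTheory Filter
open scoped ENNReal Topology

/-- First hitting time (at a time `n ≥ 1`) of level `N` by the walk `X`,
valued in `ℕ∞` (equal to `⊤ = ∞` if the level is never reached). -/
noncomputable def hitTime {Ω : Type*} (X : ℕ → Ω → ℤ) (N : ℤ) (ω : Ω) : ℕ∞ :=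
  sInf ((fun n : ℕ => (n : ℕ∞)) '' {n : ℕ | 1 ≤ n ∧ X n ω = N})

lemma walk_hit (f : ℕ → ℤ) (h0 : f 0 = 0)
    (hstep : ∀ n, f (n + 1) = f n + 1 ∨ f (n + 1) = f n - 1)
    (N : ℤ) (hN : 1 ≤ N) : ∀ m, N ≤ f m → ∃ k, 1 ≤ k ∧ k ≤ m ∧ f k = N := by
  intro m
  induction m with
  | zero => intro h; omega
  | succ m ih =>
    intro h
    by_cases hm : N ≤ f m
    · obtain ⟨k, h1, h2, h3⟩ := ih hm
      exact ⟨k, h1, h2.trans (Nat.le_succ m), h3⟩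
    · have := hstep m
      exact ⟨m + 1, by omega, le_refl _, by omega⟩

lemma pm_one_moments {Ω : Type*} [MeasurableSpace Ω] (P : Measure Ω) [IsProbabilityMeasure P]
    (ε : ℝ) (hε0 : 0 < ε) (hε : ε < 1 / 2) (W : Ω → ℤ) (hW : Measurable W)
    (h1 : P {ω | W ω = 1} = ENNReal.ofReal (1 - ε))
    (h2 : P {ω | W ω = -1} = ENNReal.ofReal ε) :
    (∀ᵐ ω ∂P, W ω = 1 ∨ W ω = -1) ∧ (∫ ω, (W ω : ℝ) ∂P) = 1 - 2 * ε := by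
  have hs1 : MeasurableSet {ω | W ω = 1} := hW (measurableSet_singleton 1)
  have hs2 : MeasurableSet {ω | W ω = -1} := hW (measurableSet_singleton (-1))
  have hdisj : Disjoint {ω | W ω = 1} {ω | W ω = -1} := by
    rw [Set.disjoint_left]; intro ω hω1 hω2
    simp only [Set.mem_setOf_eq] at hω1 hω2; omega
  have hunion : P ({ω | W ω = 1} ∪ {ω | W ω = -1}) = 1 := by
    rw [measure_union hdisj hs2, h1, h2, ← ENNReal.ofReal_add (by linarith) hε0.le]
    norm_num
  have hae : ∀ᵐ ω ∂P, W ω = 1 ∨ W ω = -1 := by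
    rw [ae_iff]
    have hset : {ω | ¬(W ω = 1 ∨ W ω = -1)} = ({ω | W ω = 1} ∪ {ω | W ω = -1})ᶜ := by
      ext ω; simp [Set.mem_union]
    rw [hset, prob_compl_eq_zero_iff (hs1.union hs2)]
    exact hunion
  refine ⟨hae, ?_⟩
  have heq : (fun ω => (W ω : ℝ)) =ᵐ[P] fun ω =>
      Set.indicator {ω | W ω = 1} (fun _ => (1 : ℝ)) ω
        - Set.indicator {ω | W ω = -1} (fun _ => (1 : ℝ)) ω := by
    filter_upwards [hae] with ω h
    rcases h with h | h
    · simp [Set.indicator_apply, h]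
    · simp [Set.indicator_apply, h]
  rw [integral_congr_ae heq,
    integral_sub ((integrable_const (1 : ℝ)).indicator hs1)
      ((integrable_const (1 : ℝ)).indicator hs2),
    integral_indicator_const _ hs1, integral_indicator_const _ hs2, measureReal_def,
    measureReal_def, h1, h2,
    ENNReal.toReal_ofReal (by linarith), ENNReal.toReal_ofReal hε0.le]
  simp; ring

/-- for `ε ∈ (0, 1/2)` and any `α ≥ 0`,
`limsup_{N → ∞} P[T_N ≥ α N] ≤ exp(-α + 1/(1 - 2ε))`. -/
theorem hitTime_limsup_tail_bound
    {Ω : Type*} [MeasurableSpace Ω] (P : Measure Ω) [IsProbabilityMeasure P]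
    (ε : ℝ) (hε0 : 0 < ε) (hε : ε < 1 / 2)
    (Z : ℕ → Ω → ℤ) (hmeas : ∀ i, Measurable (Z i))
    (hindep : iIndepFun Z P)
    (hident : ∀ i j, IdentDistrib (Z i) (Z j) P P)
    (h1 : ∀ i, P {ω | Z i ω = 1} = ENNReal.ofReal (1 - ε))
    (h2 : ∀ i, P {ω | Z i ω = -1} = ENNReal.ofReal ε)
    (α : ℝ) (hα : 0 ≤ α) :
    Filter.limsup (fun N : ℕ =>
        P {ω | ENNReal.ofReal (α * N)
            ≤ ((hitTime (fun n ω => ∑ i ∈ Finset.range n, Z i ω) (N : ℤ) ω : ℕ∞) : ℝ≥0∞)})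
      Filter.atTop
      ≤ ENNReal.ofReal (Real.exp (-α + 1 / (1 - 2 * ε))) := by
  have h2e : (0:ℝ) < 1 - 2 * ε := by linarith
  by_cases hcase : 1 < α * (1 - 2 * ε)
  swap
  · -- trivial case: the right-hand side is at least 1
    push_neg at hcase
    have hα' : α ≤ 1 / (1 - 2 * ε) := by rw [le_div_iff₀ h2e]; linarith
    have h1e : (1:ℝ) ≤ Real.exp (-α + 1 / (1 - 2 * ε)) := Real.one_le_exp (by linarith)
    have hRHS : (1:ℝ≥0∞) ≤ ENNReal.ofReal (Real.exp (-α + 1 / (1 - 2 * ε))) := by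
      rw [← ENNReal.ofReal_one]; exact ENNReal.ofReal_le_ofReal h1e
    refine le_trans ?_ hRHS
    refine limsup_le_of_le (by isBoundedDefault) ?_
    exact Filter.Eventually.of_forall fun N => prob_le_one
  -- main case
  obtain ⟨δ, hδdef⟩ : ∃ δ : ℝ, δ = α * (1 - 2 * ε) - 1 := ⟨_, rfl⟩
  have hδ : 0 < δ := by rw [hδdef]; linarith
  have hαpos : 0 < α := by nlinarith
  set Y : ℕ → Ω → ℝ := fun i ω => (Z i ω : ℝ) with hYdef
  have hYmeas : ∀ i, Measurable (Y i) := fun i => measurable_from_top.comp (hmeas i)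
  have hmom : ∀ i, (∀ᵐ ω ∂P, Z i ω = 1 ∨ Z i ω = -1) ∧ (∫ ω, Y i ω ∂P) = 1 - 2 * ε :=
    fun i => pm_one_moments P ε hε0 hε (Z i) (hmeas i) (h1 i) (h2 i)
  have hL2 : ∀ i, MemLp (Y i) 2 P := by
    intro i
    refine MemLp.of_bound (hYmeas i).aestronglyMeasurable 1 ?_
    filter_upwards [(hmom i).1] with ω h
    rcases h with h | h <;> simp [hYdef, h]
  have hInt : ∀ i, Integrable (Y i) P := fun i => (hL2 i).integrable one_le_two
  have hVar : ∀ i, variance (Y i) P ≤ 1 := by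
    intro i
    rw [variance_eq_sub (hL2 i)]
    have hsq : (fun ω => (Y i ^ 2) ω) =ᵐ[P] fun _ => (1:ℝ) := by
      filter_upwards [(hmom i).1] with ω h
      rcases h with h | h <;> simp [hYdef, h]
    have hEsq : (∫ ω, (Y i ^ 2) ω ∂P) = 1 := by rw [integral_congr_ae hsq]; simp
    show (∫ ω, (Y i ^ 2) ω ∂P) - (∫ ω, Y i ω ∂P) ^ 2 ≤ 1
    rw [hEsq]
    nlinarith [sq_nonneg (∫ ω, Y i ω ∂P)]
  have hES : ∀ m : ℕ, (∫ ω, (∑ i ∈ Finset.range m, Y i ω) ∂P) = m * (1 - 2 * ε) := by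
    intro m
    rw [integral_finset_sum _ (fun i _ => hInt i),
      Finset.sum_congr rfl (fun i _ => (hmom i).2)]
    simp [mul_comm]; ring
  have hVarS : ∀ m : ℕ, variance (fun ω => ∑ i ∈ Finset.range m, Y i ω) P ≤ m := by
    intro m
    have hfun : (fun ω => ∑ i ∈ Finset.range m, Y i ω) = ∑ i ∈ Finset.range m, Y i := by
      funext ω; simp
    rw [hfun, IndepFun.variance_sum (fun i _ => hL2 i)
      (fun i _ j _ hij =>
        (hindep.indepFun hij).comp measurable_from_top measurable_from_top)]
    calc ∑ i ∈ Finset.range m, variance (Y i) P ≤ ∑ i ∈ Finset.range m, (1:ℝ) :=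
          Finset.sum_le_sum fun i _ => hVar i
      _ = m := by simp
  have hL2S : ∀ m : ℕ, MemLp (fun ω => ∑ i ∈ Finset.range m, Y i ω) 2 P := by
    intro m
    have hfun : (fun ω => ∑ i ∈ Finset.range m, Y i ω) = ∑ i ∈ Finset.range m, Y i := by
      funext ω; simp
    rw [hfun]
    exact memLp_finsetSum' _ fun i _ => hL2 i
  have hAnull : P {ω | ¬ ∀ i, Z i ω = 1 ∨ Z i ω = -1} = 0 :=
    ae_iff.mp (ae_all_iff.mpr fun i => (hmom i).1)
  -- the key quantitative bound, eventually in N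
  have key : ∀ᶠ N : ℕ in atTop,
      P {ω | ENNReal.ofReal (α * N)
          ≤ ((hitTime (fun n ω => ∑ i ∈ Finset.range n, Z i ω) (N : ℤ) ω : ℕ∞) : ℝ≥0∞)}
        ≤ ENNReal.ofReal (α * N / (δ * N / 2) ^ 2) := by
    have e1 : ∀ᶠ N : ℕ in atTop, (1:ℝ) ≤ N := by
      filter_upwards [eventually_ge_atTop 1] with N hN; exact_mod_cast hN
    have e2 : ∀ᶠ N : ℕ in atTop, (2:ℝ) ≤ α * N :=
      (tendsto_natCast_atTop_atTop.const_mul_atTop hαpos).eventually_ge_atTop 2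
    have e3 : ∀ᶠ N : ℕ in atTop, (2:ℝ) ≤ δ * N :=
      (tendsto_natCast_atTop_atTop.const_mul_atTop hδ).eventually_ge_atTop 2
    filter_upwards [e1, e2, e3, eventually_ge_atTop 1] with N hN1 hN2 hN3 hNnat
    set m : ℕ := ⌊α * N⌋₊ - 1 with hmdef
    have hαNnn : (0:ℝ) ≤ α * N := by linarith
    have hfl1 : 1 ≤ ⌊α * N⌋₊ := Nat.le_floor (by exact_mod_cast (by linarith : (1:ℝ) ≤ α * N))
    have hmcast : (m:ℝ) = (⌊α * N⌋₊ : ℝ) - 1 := by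
      simp only [hmdef]; push_cast [Nat.cast_sub hfl1]; ring
    have hmlt : (m:ℝ) < α * N := by
      have := Nat.floor_le hαNnn
      rw [hmcast]; linarith
    have hmge : α * N - 2 ≤ (m:ℝ) := by
      have := Nat.lt_floor_add_one (α * N)
      rw [hmcast]; linarith
    have hc : δ * N / 2 ≤ (m:ℝ) * (1 - 2 * ε) - ((N:ℝ) - 1) := by
      have h1' : (α * N - 2) * (1 - 2 * ε) ≤ (m:ℝ) * (1 - 2 * ε) :=
        mul_le_mul_of_nonneg_right hmge h2e.le
      rw [hδdef] at hN3 ⊢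
      nlinarith
    have hcpos : 0 < δ * N / 2 := by linarith
    -- set inclusion
    have hsub : {ω | ENNReal.ofReal (α * N)
          ≤ ((hitTime (fun n ω => ∑ i ∈ Finset.range n, Z i ω) (N : ℤ) ω : ℕ∞) : ℝ≥0∞)}
        ⊆ {ω | δ * N / 2 ≤ |(∑ i ∈ Finset.range m, Y i ω)
              - ∫ ω', ∑ i ∈ Finset.range m, Y i ω' ∂P|}
          ∪ {ω | ¬ ∀ i, Z i ω = 1 ∨ Z i ω = -1} := by
      intro ω hω
      by_cases hA : ∀ i, Z i ω = 1 ∨ Z i ω = -1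
      swap
      · exact Or.inr hA
      left
      simp only [Set.mem_setOf_eq] at hω ⊢
      have hXm : (∑ i ∈ Finset.range m, Z i ω) ≤ (N:ℤ) - 1 := by
        by_contra hcon
        push_neg at hcon
        obtain ⟨k, hk1, hk2, hk3⟩ := walk_hit (fun n => ∑ i ∈ Finset.range n, Z i ω)
          (by simp)
          (fun n => by
            rcases hA n with h | h
            · left
              show ∑ i ∈ Finset.range (n + 1), Z i ω = ∑ i ∈ Finset.range n, Z i ω + 1
              rw [Finset.sum_range_succ, h]
            · right
              show ∑ i ∈ Finset.range (n + 1), Z i ω = ∑ i ∈ Finset.range n, Z i ω - 1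
              rw [Finset.sum_range_succ, h]; ring)
          (N:ℤ) (by exact_mod_cast hNnat) m
          (by show (N:ℤ) ≤ ∑ i ∈ Finset.range m, Z i ω; omega)
        have hT : hitTime (fun n ω => ∑ i ∈ Finset.range n, Z i ω) (N:ℤ) ω ≤ (k:ℕ∞) :=
          sInf_le ⟨k, ⟨hk1, hk3⟩, rfl⟩
        have hle : ENNReal.ofReal (α * N) ≤ ((k:ℕ):ℝ≥0∞) := by
          refine le_trans hω ?_
          have := ENat.toENNReal_le.mpr hT
          simpa using this
        have hk' : α * N ≤ (k:ℝ) := by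
          rwa [← ENNReal.ofReal_natCast, ENNReal.ofReal_le_ofReal_iff (Nat.cast_nonneg k)]
            at hle
        have : (k:ℝ) ≤ (m:ℝ) := Nat.cast_le.mpr hk2
        linarith
      have hS : (∑ i ∈ Finset.range m, Y i ω) ≤ (N:ℝ) - 1 := by
        have h' : ((∑ i ∈ Finset.range m, Z i ω : ℤ) : ℝ) ≤ ((N:ℤ):ℝ) - 1 := by
          exact_mod_cast hXm
        push_cast at h' ⊢
        simpa [hYdef] using h'
      rw [hES m]
      refine le_abs.mpr (Or.inr ?_)
      linarith
    calc P {ω | ENNReal.ofReal (α * N)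
          ≤ ((hitTime (fun n ω => ∑ i ∈ Finset.range n, Z i ω) (N : ℤ) ω : ℕ∞) : ℝ≥0∞)}
        ≤ P ({ω | δ * N / 2 ≤ |(∑ i ∈ Finset.range m, Y i ω)
              - ∫ ω', ∑ i ∈ Finset.range m, Y i ω' ∂P|}
            ∪ {ω | ¬ ∀ i, Z i ω = 1 ∨ Z i ω = -1}) := measure_mono hsub
      _ ≤ P {ω | δ * N / 2 ≤ |(∑ i ∈ Finset.range m, Y i ω)
              - ∫ ω', ∑ i ∈ Finset.range m, Y i ω' ∂P|}
            + P {ω | ¬ ∀ i, Z i ω = 1 ∨ Z i ω = -1} := measure_union_le _ _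
      _ = P {ω | δ * N / 2 ≤ |(∑ i ∈ Finset.range m, Y i ω)
              - ∫ ω', ∑ i ∈ Finset.range m, Y i ω' ∂P|} := by rw [hAnull, add_zero]
      _ ≤ ENNReal.ofReal (variance (fun ω => ∑ i ∈ Finset.range m, Y i ω) P
            / (δ * N / 2) ^ 2) := meas_ge_le_variance_div_sq (hL2S m) hcpos
      _ ≤ ENNReal.ofReal (α * N / (δ * N / 2) ^ 2) := by
          apply ENNReal.ofReal_le_ofReal
          have hnum : variance (fun ω => ∑ i ∈ Finset.range m, Y i ω) P ≤ α * N :=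
            (hVarS m).trans hmlt.le
          gcongr
  -- conclude by a squeeze argument
  have hup : Tendsto (fun N : ℕ => ENNReal.ofReal (α * N / (δ * N / 2) ^ 2)) atTop (𝓝 0) := by
    have heq : ∀ N : ℕ, α * N / (δ * N / 2) ^ 2 = (4 * α / δ ^ 2) / N := by
      intro N
      rcases Nat.eq_zero_or_pos N with h | h
      · simp [h]
      · have hN : (0:ℝ) < N := by exact_mod_cast h
        field_simp
        ring
    simp only [heq]
    have := ENNReal.tendsto_ofReal (tendsto_const_div_atTop_nhds_zero_nat (4 * α / δ ^ 2))
    simpa using this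
  have htend : Tendsto (fun N : ℕ =>
      P {ω | ENNReal.ofReal (α * N)
          ≤ ((hitTime (fun n ω => ∑ i ∈ Finset.range n, Z i ω) (N : ℤ) ω : ℕ∞) : ℝ≥0∞)})
      atTop (𝓝 0) :=
    tendsto_of_tendsto_of_tendsto_of_le_of_le' tendsto_const_nhds hup
      (Filter.Eventually.of_forall fun N => zero_le) key
  rw [htend.limsup_eq]
  exact zero_le
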